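/- arXiv:1702.07062 — 2 statements merged into one kernel-verified Lean document; each statement's English description precedes it below -/
import Mathlib

section
/- Let μ > 0 and for k_1, k_2 ∈ Z^3 set α_1 = 4π²μ(|k_1+k_2|² + |k_1|² + |k_2|²) + 3 and β_1 = 4π²(|k_1+k_2|² − |k_1|² − |k_2|²). Then there exist positive constants C_1, C_2 depending only on μ such that Re(1/(α_1 + i β_1)) ≥ C_1 (|k_1|² + |k_2|² + 1)^{-1} and |1/(α_1 + i β_1)| ≤ C_2 (|k_1|² + |k_2|² + 1)^{-1} for all k_1, k_2 ∈ Z^3. -/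
noncomputable section

/-- `|k|²` for `k ∈ ℤ³` (Euclidean norm squared). -/
def nsq (k : Fin 3 → ℤ) : ℝ := ∑ i, ((k i : ℝ)) ^ 2

/-- `α₁ = 4π²μ(|k₁+k₂|² + |k₁|² + |k₂|²) + 3`. -/
def alpha1 (μ : ℝ) (k₁ k₂ : Fin 3 → ℤ) : ℝ :=
  4 * Real.pi ^ 2 * μ * (nsq (k₁ + k₂) + nsq k₁ + nsq k₂) + 3

/-- `β₁ = 4π²(|k₁+k₂|² − |k₁|² − |k₂|²)`. -/
def beta1 (k₁ k₂ : Fin 3 → ℤ) : ℝ :=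
  4 * Real.pi ^ 2 * (nsq (k₁ + k₂) - nsq k₁ - nsq k₂)

lemma nsq_nonneg (k : Fin 3 → ℤ) : 0 ≤ nsq k :=
  Finset.sum_nonneg fun i _ => sq_nonneg _

lemma nsq_add_le (k₁ k₂ : Fin 3 → ℤ) : nsq (k₁ + k₂) ≤ 2 * (nsq k₁ + nsq k₂) := by
  unfold nsq
  simp only [Fin.sum_univ_three, Pi.add_apply]
  push_cast
  nlinarith [sq_nonneg ((k₁ 0 : ℝ) - k₂ 0), sq_nonneg ((k₁ 1 : ℝ) - k₂ 1),
    sq_nonneg ((k₁ 2 : ℝ) - k₂ 2)]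

/-- there exist `C₁, C₂ > 0` (depending only on `μ`) with
`Re(1/(α₁+iβ₁)) ≥ C₁(|k₁|²+|k₂|²+1)⁻¹` and `|1/(α₁+iβ₁)| ≤ C₂(|k₁|²+|k₂|²+1)⁻¹`. -/
theorem statement4 (μ : ℝ) (hμ : 0 < μ) :
    ∃ C₁ : ℝ, 0 < C₁ ∧ ∃ C₂ : ℝ, 0 < C₂ ∧ ∀ k₁ k₂ : Fin 3 → ℤ,
      C₁ * (nsq k₁ + nsq k₂ + 1)⁻¹ ≤
          ((1 : ℂ) / ((alpha1 μ k₁ k₂ : ℂ) + (beta1 k₁ k₂ : ℂ) * Complex.I)).re ∧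
      ‖(1 : ℂ) / ((alpha1 μ k₁ k₂ : ℂ) + (beta1 k₁ k₂ : ℂ) * Complex.I)‖ ≤
          C₂ * (nsq k₁ + nsq k₂ + 1)⁻¹ := by
  have hπ : (0:ℝ) < Real.pi ^ 2 := by positivity
  set c : ℝ := min (4 * Real.pi ^ 2 * μ) 3 with hc
  have hc0 : 0 < c := lt_min (by positivity) (by norm_num)
  set B : ℝ := 12 * Real.pi ^ 2 * (μ + 1) + 3 with hB
  have hB0 : 0 < B := by positivity
  refine ⟨c / B ^ 2, by positivity, c⁻¹, by positivity, fun k₁ k₂ => ?_⟩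
  set S : ℝ := nsq k₁ + nsq k₂ with hS
  have hS0 : 0 ≤ S := add_nonneg (nsq_nonneg _) (nsq_nonneg _)
  have hN0 : 0 ≤ nsq (k₁ + k₂) := nsq_nonneg _
  have hN2 : nsq (k₁ + k₂) ≤ 2 * S := nsq_add_le k₁ k₂
  set α : ℝ := alpha1 μ k₁ k₂ with hα
  set β : ℝ := beta1 k₁ k₂ with hβ
  have hαlb : c * (S + 1) ≤ α := by
    have h1 : c ≤ 4 * Real.pi ^ 2 * μ := min_le_left _ _
    have h2 : c ≤ 3 := min_le_right _ _
    have : c * (S + 1) = c * S + c := by ring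
    rw [this]
    unfold α
    unfold alpha1
    nlinarith [mul_pos hπ hμ]
  have hα0 : 0 < α := lt_of_lt_of_le (by positivity) hαlb
  have hβub : |β| ≤ 4 * Real.pi ^ 2 * (nsq (k₁ + k₂) + S) := by
    unfold β
    unfold beta1
    rw [abs_mul]
    rw [abs_of_nonneg (by positivity : (0:ℝ) ≤ 4 * Real.pi ^ 2)]
    have := abs_sub_abs_le_abs_sub (nsq (k₁ + k₂)) (nsq k₁ + nsq k₂)
    have h := abs_sub (nsq (k₁ + k₂)) (nsq k₁ + nsq k₂)
    have : |nsq (k₁ + k₂) - nsq k₁ - nsq k₂| ≤ nsq (k₁ + k₂) + S := by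
      rw [abs_le]
      constructor <;> unfold S <;> nlinarith
    nlinarith
  have hsum : α + |β| ≤ B * (S + 1) := by
    have : α ≤ 4 * Real.pi ^ 2 * μ * (nsq (k₁ + k₂) + S) + 3 := by
      unfold α; unfold alpha1; unfold S; nlinarith
    have hNS : nsq (k₁ + k₂) + S ≤ 3 * S := by linarith
    unfold B
    nlinarith [mul_pos hπ hμ]
  set z : ℂ := (α : ℂ) + (β : ℂ) * Complex.I with hz
  have hre : z.re = α := by simp [hz]
  have hns : Complex.normSq z = α ^ 2 + β ^ 2 := by
    rw [hz, Complex.normSq_add_mul_I]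
  have hns_ub : Complex.normSq z ≤ (B * (S + 1)) ^ 2 := by
    rw [hns]
    nlinarith [abs_nonneg β, sq_abs β, hα0]
  have hns_pos : 0 < Complex.normSq z := by rw [hns]; positivity
  constructor
  · rw [one_div, Complex.inv_re, hre, hns]
    rw [show c / B ^ 2 * (S + 1)⁻¹ = (c * (S + 1)) / ((B * (S + 1)) ^ 2) by
      field_simp]
    exact div_le_div₀ hα0.le hαlb (by positivity) (hns ▸ hns_ub)
  · have hnz : c * (S + 1) ≤ ‖z‖ := by
      calc c * (S + 1) ≤ α := hαlb
        _ = |z.re| := by rw [hre, abs_of_pos hα0]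
        _ ≤ ‖z‖ := Complex.abs_re_le_norm z
    rw [norm_div, norm_one, one_div, ← mul_inv]
    exact inv_anti₀ (by positivity) hnz
end
end

section
/- Let α, β, γ ∈ (0,5), ζ ∈ (0, min(α,β)] and η ∈ (0, min(α',β')] (with α', β' ∈ (0,5)) satisfy α+β−5 < ζ, α'+β'−5 < η, and α+β+α'+β'+γ−10 < ζ+η. Then the iterated convolution-type integral ∫∫ ‖z'−u‖_s^{-α} ‖w'−u‖_s^{-β} ‖u−v‖_s^{-γ} ‖z''−v‖_s^{-α'} ‖w''−v‖_s^{-β'} du dv over (compactly supported kernels in) R^4 × R^4 is bounded by a constant times ‖z'−w'‖_s^{-ζ} ‖z''−w''‖_s^{-η}, where ‖(t,x)‖_s = |t|^{1/2} + |x_1| + |x_2| + |x_3| is the parabolic norm on R^4. -/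
/-!
If `‖w - u‖ ≤ ‖z - u‖`, the triangle inequality gives `‖z - w‖ ≤ 2 ‖z - u‖`, hence for `ρ ≤ p`
`‖z - u‖^{-p} ‖w - u‖^{-q} ≤ 2^ρ ‖z - w‖^{-ρ} ‖w - u‖^{-(p + q - ρ)}`.
Splitting the two kernels at `u` with `ρ = ζ` and the two at `v` with `ρ = η` bounds the integrand
by `‖z' - w'‖^{-ζ} ‖z'' - w''‖^{-η}` times four chains `‖X - u‖^{-c} ‖u - v‖^{-γ} ‖Y - v‖^{-c'}`,
where `c = α + β - ζ` and `c' = α' + β' - η` lie in `(0, 5)` and `c + γ + c' < 10`.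
A chain is bounded uniformly in `X, Y` by splitting once more, at `v`, with any
`ρ ∈ (max (γ + c' - 5) 0, min γ (min c' (5 - c)))`: what remains are single kernels of exponents
`γ + c' - ρ` and `c + ρ`, both below the homogeneous dimension `5`. Such kernels are integrable
because a parabolic ball of radius `r` has volume at most `16 r ^ 5`.
-/

open MeasureTheory
open scoped ENNReal

noncomputable section

/-- The parabolic norm `‖(t,x)‖_s = |t|^{1/2} + |x₁| + |x₂| + |x₃|` on `ℝ⁴ = ℝ × ℝ³`. -/
def pnorm (z : ℝ × (Fin 3 → ℝ)) : ℝ := Real.sqrt |z.1| + ∑ i, |z.2 i|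

/-- The compactly supported singular kernel `‖a - b‖_s^{-α} 1_{‖a-b‖_s ≤ 1}`. -/
def sker (α : ℝ) (a b : ℝ × (Fin 3 → ℝ)) : ℝ≥0∞ :=
  if pnorm (a - b) ≤ 1 then (ENNReal.ofReal (pnorm (a - b))) ^ (-α) else 0

local notation "ℝ⁴" => ℝ × (Fin 3 → ℝ)

namespace ENNReal

lemma rpow_neg_mul_rpow_neg_le_of_le {a b : ℝ≥0∞} {p q : ℝ} (hp : 0 ≤ p) (hq : 0 ≤ q)
    (hab : a ≤ b) : a ^ (-p) * b ^ (-q) ≤ a ^ (-(p + q)) := by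
  simp only [rpow_neg, ← inv_rpow]
  rw [rpow_add_of_nonneg _ _ hp hq]
  gcongr

lemma inv_le_two_mul_inv {a d : ℝ≥0∞} (hd : d ≤ 2 * a) : a⁻¹ ≤ 2 * d⁻¹ := by
  calc a⁻¹ = 2 * (2 * a)⁻¹ := by
        rw [ENNReal.mul_inv (by simp) (by simp), ← mul_assoc,
          ENNReal.mul_inv_cancel (by simp) (by simp), one_mul]
    _ ≤ 2 * d⁻¹ := by gcongr

lemma rpow_neg_mul_rpow_neg_le_of_le_add {a b d : ℝ≥0∞} {p q ρ : ℝ} (hρ : 0 ≤ ρ) (hρp : ρ ≤ p)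
    (hq : 0 ≤ q) (hba : b ≤ a) (hd : d ≤ a + b) :
    a ^ (-p) * b ^ (-q) ≤ 2 ^ ρ * d ^ (-ρ) * b ^ (-(p + q - ρ)) := by
  simp only [rpow_neg, ← inv_rpow]
  have hpρ : 0 ≤ p - ρ := sub_nonneg.2 hρp
  calc a⁻¹ ^ p * b⁻¹ ^ q = a⁻¹ ^ ρ * a⁻¹ ^ (p - ρ) * b⁻¹ ^ q := by
        rw [← rpow_add_of_nonneg _ _ hρ hpρ, add_sub_cancel]
    _ ≤ (2 * d⁻¹) ^ ρ * b⁻¹ ^ (p - ρ) * b⁻¹ ^ q := by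
        gcongr
        exact inv_le_two_mul_inv (hd.trans (by rw [two_mul]; gcongr))
    _ = 2 ^ ρ * d⁻¹ ^ ρ * b⁻¹ ^ (p + q - ρ) := by
        rw [mul_rpow_of_nonneg _ _ hρ, mul_assoc, ← rpow_add_of_nonneg _ _ hpρ hq]
        ring_nf

end ENNReal

lemma Real.sqrt_add_le_sqrt_add_sqrt {x y : ℝ} (hx : 0 ≤ x) (hy : 0 ≤ y) :
    √(x + y) ≤ √x + √y := by
  rw [Real.sqrt_le_left (by positivity), add_sq, Real.sq_sqrt hx, Real.sq_sqrt hy]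
  nlinarith [Real.sqrt_nonneg x, Real.sqrt_nonneg y]

lemma pnorm_nonneg (z : ℝ⁴) : 0 ≤ pnorm z := by
  unfold pnorm; positivity

lemma pnorm_neg (z : ℝ⁴) : pnorm (-z) = pnorm z := by
  simp [pnorm]

lemma pnorm_sub_comm (a b : ℝ⁴) : pnorm (a - b) = pnorm (b - a) := by
  rw [← pnorm_neg, neg_sub]

lemma pnorm_add_le (a b : ℝ⁴) : pnorm (a + b) ≤ pnorm a + pnorm b := by
  have htime : √|a.1 + b.1| ≤ √|a.1| + √|b.1| :=
    (Real.sqrt_le_sqrt (abs_add_le _ _)).trans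
      (Real.sqrt_add_le_sqrt_add_sqrt (abs_nonneg _) (abs_nonneg _))
  have hspace : ∑ i, |a.2 i + b.2 i| ≤ ∑ i, |a.2 i| + ∑ i, |b.2 i| := by
    rw [← Finset.sum_add_distrib]
    exact Finset.sum_le_sum fun i _ => abs_add_le _ _
  simp only [pnorm, Prod.fst_add, Prod.snd_add, Pi.add_apply]
  linarith

lemma pnorm_sub_le_pnorm_sub_add_pnorm_sub (a b c : ℝ⁴) :
    pnorm (a - c) ≤ pnorm (a - b) + pnorm (b - c) := by
  simpa using pnorm_add_le (a - b) (b - c)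

@[fun_prop]
lemma continuous_pnorm : Continuous pnorm := by
  unfold pnorm; fun_prop

lemma volume_setOf_pnorm_le {r : ℝ} (hr : 0 ≤ r) :
    volume {u : ℝ⁴ | pnorm u ≤ r} ≤ ENNReal.ofReal (16 * r ^ 5) := by
  have hsub : {u : ℝ⁴ | pnorm u ≤ r} ⊆
      Set.Icc (-r ^ 2) (r ^ 2) ×ˢ Set.univ.pi fun _ => Set.Icc (-r) r := by
    rintro u (hu : pnorm u ≤ r)
    unfold pnorm at hu
    have hsum := Finset.sum_nonneg fun i (_ : i ∈ Finset.univ) => abs_nonneg (u.2 i)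
    have htime : √|u.1| ≤ r := by linarith
    refine ⟨abs_le.1 ?_, fun i _ => abs_le.1 ?_⟩
    · rwa [Real.sqrt_le_left hr] at htime
    · have := Finset.single_le_sum (fun j _ => abs_nonneg (u.2 j)) (Finset.mem_univ i)
      linarith [Real.sqrt_nonneg |u.1|]
  calc volume {u : ℝ⁴ | pnorm u ≤ r}
      ≤ volume (Set.Icc (-r ^ 2) (r ^ 2) ×ˢ Set.univ.pi fun _ : Fin 3 => Set.Icc (-r) r) :=
        measure_mono hsub
    _ = ENNReal.ofReal (2 * r ^ 2) * ENNReal.ofReal (2 * r) ^ 3 := by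
        rw [Measure.volume_eq_prod, Measure.prod_prod, volume_pi_pi, Real.volume_Icc,
          Finset.prod_const, Real.volume_Icc, Finset.card_univ, Fintype.card_fin]
        ring_nf
    _ = ENNReal.ofReal (16 * r ^ 5) := by
        rw [← ENNReal.ofReal_pow (by positivity), ← ENNReal.ofReal_mul (by positivity)]
        ring_nf

-- Instance search does not see through `volume = volume.prod volume` on a product.
instance : (volume : Measure ℝ⁴).IsAddRightInvariant :=
  Measure.prod.instIsAddRightInvariant

lemma sker_of_le {δ : ℝ} {a b : ℝ⁴} (h : pnorm (a - b) ≤ 1) :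
    sker δ a b = ENNReal.ofReal (pnorm (a - b)) ^ (-δ) :=
  if_pos h

lemma sker_of_not_le {δ : ℝ} {a b : ℝ⁴} (h : ¬pnorm (a - b) ≤ 1) : sker δ a b = 0 :=
  if_neg h

@[fun_prop]
lemma measurable_sker_uncurry (δ : ℝ) : Measurable fun p : ℝ⁴ × ℝ⁴ => sker δ p.1 p.2 :=
  Measurable.ite (measurableSet_le (by fun_prop) measurable_const)
    (ENNReal.continuous_rpow_const.measurable.comp (by fun_prop)) measurable_const

@[fun_prop]
lemma measurable_sker (δ : ℝ) (a : ℝ⁴) : Measurable (sker δ a) :=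
  (measurable_sker_uncurry δ).comp measurable_prodMk_left

lemma lintegral_sker (δ : ℝ) (x : ℝ⁴) : ∫⁻ u, sker δ x u = ∫⁻ u, sker δ 0 u := by
  have h : ∀ u, sker δ x u = sker δ 0 (u - x) := fun u => by
    rw [sker, sker, zero_sub, pnorm_neg, pnorm_sub_comm x u]
  simp_rw [h]
  exact lintegral_sub_right_eq_self (sker δ 0) x

lemma sker_zero_le_tsum {δ : ℝ} (hδ : 0 ≤ δ) (u : ℝ⁴) :
    sker δ 0 u ≤ ∑' n : ℕ,
      {u : ℝ⁴ | pnorm u ≤ 2⁻¹ ^ n}.indicator (fun _ => (2 ^ δ : ℝ≥0∞) ^ (n + 1)) u := by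
  rw [sker, zero_sub, pnorm_neg]
  split_ifs with hu
  · rcases (pnorm_nonneg u).eq_or_lt with hu0 | hu0
    · have hmem (n : ℕ) : u ∈ {v : ℝ⁴ | pnorm v ≤ 2⁻¹ ^ n} :=
        show pnorm u ≤ _ from hu0 ▸ by positivity
      calc _ ≤ ∑' _ : ℕ, (1 : ℝ≥0∞) := by simp
        _ ≤ _ := ENNReal.tsum_le_tsum fun n => by
          rw [Set.indicator_of_mem (hmem n)]
          exact one_le_pow₀ (ENNReal.one_rpow δ ▸ ENNReal.rpow_le_rpow one_le_two hδ)
    · obtain ⟨n, hlt, hle⟩ := exists_nat_pow_near_of_lt_one hu0 hu (by norm_num : (0 : ℝ) < 2⁻¹)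
        (by norm_num)
      have hmem : u ∈ {v : ℝ⁴ | pnorm v ≤ 2⁻¹ ^ n} := hle
      refine le_trans ?_ (ENNReal.le_tsum n)
      rw [Set.indicator_of_mem hmem]
      calc ENNReal.ofReal (pnorm u) ^ (-δ) ≤ ENNReal.ofReal (2⁻¹ ^ (n + 1)) ^ (-δ) := by
            simp only [ENNReal.rpow_neg]
            gcongr
        _ = (2 ^ δ) ^ (n + 1) := by
            rw [ENNReal.ofReal_pow (by norm_num), ENNReal.ofReal_inv_of_pos two_pos,
              ENNReal.ofReal_ofNat, ENNReal.rpow_neg, ← ENNReal.inv_rpow, ENNReal.inv_pow, inv_inv,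
              ← ENNReal.rpow_natCast, ← ENNReal.rpow_natCast, ← ENNReal.rpow_mul,
              ← ENNReal.rpow_mul, mul_comm]
  · exact zero_le

lemma lintegral_sker_zero_lt_top {δ : ℝ} (hδ : 0 ≤ δ) (hδ5 : δ < 5) :
    ∫⁻ u : ℝ⁴, sker δ 0 u < ⊤ := by
  set c : ℝ≥0∞ := 2 ^ δ
  have hratio : c * 2⁻¹ ^ 5 < 1 := by
    have hc5 : c < 2 ^ 5 := by
      simpa using ENNReal.rpow_lt_rpow_of_exponent_lt (x := 2) (by norm_num) (by norm_num) hδ5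
    calc c * 2⁻¹ ^ 5 < 2 ^ 5 * 2⁻¹ ^ 5 := by gcongr <;> simp
      _ = 1 := by rw [← mul_pow, ENNReal.mul_inv_cancel (by norm_num) (by norm_num), one_pow]
  have hball (n : ℕ) : volume {u : ℝ⁴ | pnorm u ≤ 2⁻¹ ^ n} ≤ 16 * (2⁻¹ ^ 5) ^ n := by
    refine (volume_setOf_pnorm_le (by positivity)).trans_eq ?_
    rw [ENNReal.ofReal_mul (by norm_num), ← pow_mul, mul_comm n, pow_mul,
      ENNReal.ofReal_pow (by norm_num), ENNReal.ofReal_pow (by norm_num),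
      ENNReal.ofReal_inv_of_pos two_pos]
    simp
  calc ∫⁻ u, sker δ 0 u
      ≤ ∫⁻ u, ∑' n : ℕ, {u : ℝ⁴ | pnorm u ≤ 2⁻¹ ^ n}.indicator (fun _ => c ^ (n + 1)) u :=
        lintegral_mono (sker_zero_le_tsum hδ)
    _ = ∑' n : ℕ, c ^ (n + 1) * volume {u : ℝ⁴ | pnorm u ≤ 2⁻¹ ^ n} := by
        rw [lintegral_tsum fun n => (measurable_const.indicator
          (measurableSet_le (by fun_prop) measurable_const)).aemeasurable]
        congr! with n
        exact lintegral_indicator_const (measurableSet_le (by fun_prop) measurable_const) _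
    _ ≤ ∑' n : ℕ, c ^ (n + 1) * (16 * (2⁻¹ ^ 5) ^ n) := by gcongr with n; exact hball n
    _ = 16 * c * ∑' n : ℕ, (c * 2⁻¹ ^ 5) ^ n := by
        rw [← ENNReal.tsum_mul_left]
        exact tsum_congr fun n => by ring
    _ < ⊤ := by
        rw [ENNReal.tsum_geometric]
        exact ENNReal.mul_lt_top (by finiteness) (ENNReal.inv_lt_top.2 (tsub_pos_of_lt hratio))

lemma ofReal_pnorm_sub_le_add (z w u : ℝ⁴) :
    ENNReal.ofReal (pnorm (z - w)) ≤
      ENNReal.ofReal (pnorm (z - u)) + ENNReal.ofReal (pnorm (w - u)) := by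
  rw [← ENNReal.ofReal_add (pnorm_nonneg _) (pnorm_nonneg _), pnorm_sub_comm w u]
  exact ENNReal.ofReal_le_ofReal (pnorm_sub_le_pnorm_sub_add_pnorm_sub z u w)

lemma sker_mul_sker_le {p q ρ : ℝ} (hρ : 0 ≤ ρ) (hρp : ρ ≤ p) (hρq : ρ ≤ q) (z w u : ℝ⁴) :
    sker p z u * sker q w u ≤
      2 ^ ρ * ENNReal.ofReal (pnorm (z - w)) ^ (-ρ) *
        (sker (p + q - ρ) z u + sker (p + q - ρ) w u) := by
  by_cases hz : pnorm (z - u) ≤ 1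
  · by_cases hw : pnorm (w - u) ≤ 1
    · rw [sker_of_le hz, sker_of_le hw, sker_of_le hz, sker_of_le hw]
      rcases le_total (pnorm (w - u)) (pnorm (z - u)) with h | h
      · refine (ENNReal.rpow_neg_mul_rpow_neg_le_of_le_add hρ hρp (hρ.trans hρq)
          (ENNReal.ofReal_le_ofReal h) (ofReal_pnorm_sub_le_add z w u)).trans ?_
        gcongr
        exact le_add_self
      · rw [mul_comm, pnorm_sub_comm z w, add_comm p q]
        refine (ENNReal.rpow_neg_mul_rpow_neg_le_of_le_add hρ hρq (hρ.trans hρp)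
          (ENNReal.ofReal_le_ofReal h) (ofReal_pnorm_sub_le_add w z u)).trans ?_
        gcongr
        exact le_self_add
    · simp [sker_of_not_le hw]
  · simp [sker_of_not_le hz]

lemma sker_mul_rpow_neg_le {p q : ℝ} (hp : 0 ≤ p) (hq : 0 ≤ q) (x y u : ℝ⁴) :
    sker p x u * ENNReal.ofReal (pnorm (u - y)) ^ (-q) ≤
      sker (p + q) x u + sker (p + q) y u := by
  by_cases hx : pnorm (x - u) ≤ 1
  · rw [sker_of_le hx, sker_of_le hx, pnorm_sub_comm u y]
    rcases le_total (pnorm (x - u)) (pnorm (y - u)) with h | h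
    · exact (ENNReal.rpow_neg_mul_rpow_neg_le_of_le hp hq (ENNReal.ofReal_le_ofReal h)).trans
        le_self_add
    · rw [sker_of_le (h.trans hx), mul_comm, add_comm p q]
      exact (ENNReal.rpow_neg_mul_rpow_neg_le_of_le hq hp (ENNReal.ofReal_le_ofReal h)).trans
        le_add_self
  · simp [sker_of_not_le hx]

lemma lintegral_sker_mul_sker_le {γ c' ρ : ℝ} (hρ : 0 ≤ ρ) (hργ : ρ ≤ γ) (hρc' : ρ ≤ c')
    (u Y : ℝ⁴) :
    ∫⁻ v, sker γ u v * sker c' Y v ≤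
      2 ^ ρ * ENNReal.ofReal (pnorm (u - Y)) ^ (-ρ) * (2 * ∫⁻ v, sker (γ + c' - ρ) 0 v) := by
  calc ∫⁻ v, sker γ u v * sker c' Y v
      ≤ ∫⁻ v, 2 ^ ρ * ENNReal.ofReal (pnorm (u - Y)) ^ (-ρ) *
          (sker (γ + c' - ρ) u v + sker (γ + c' - ρ) Y v) :=
        lintegral_mono fun v => sker_mul_sker_le hρ hργ hρc' u Y v
    _ = _ := by
        rw [lintegral_const_mul _ (by fun_prop), lintegral_add_left (by fun_prop),
          lintegral_sker _ u, lintegral_sker _ Y, two_mul]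

lemma lintegral_lintegral_sker_chain_le {c γ c' ρ : ℝ} (hc : 0 ≤ c) (hρ : 0 ≤ ρ) (hργ : ρ ≤ γ)
    (hρc' : ρ ≤ c') (X Y : ℝ⁴) :
    ∫⁻ u, ∫⁻ v, sker c X u * sker γ u v * sker c' Y v ≤
      2 ^ ρ * (2 * ∫⁻ v, sker (γ + c' - ρ) 0 v) * (2 * ∫⁻ u, sker (c + ρ) 0 u) := by
  set K := 2 ^ ρ * (2 * ∫⁻ v, sker (γ + c' - ρ) 0 v)
  calc ∫⁻ u, ∫⁻ v, sker c X u * sker γ u v * sker c' Y v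
      = ∫⁻ u, sker c X u * ∫⁻ v, sker γ u v * sker c' Y v := by
        refine lintegral_congr fun u => ?_
        rw [← lintegral_const_mul _ (by fun_prop)]
        simp only [mul_assoc]
    _ ≤ ∫⁻ u, K * (sker c X u * ENNReal.ofReal (pnorm (u - Y)) ^ (-ρ)) := by
        refine lintegral_mono fun u => ?_
        calc sker c X u * ∫⁻ v, sker γ u v * sker c' Y v
            ≤ sker c X u * (2 ^ ρ * ENNReal.ofReal (pnorm (u - Y)) ^ (-ρ) *
                (2 * ∫⁻ v, sker (γ + c' - ρ) 0 v)) := by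
              gcongr
              exact lintegral_sker_mul_sker_le hρ hργ hρc' u Y
          _ = _ := by ring
    _ ≤ ∫⁻ u, K * (sker (c + ρ) X u + sker (c + ρ) Y u) :=
        lintegral_mono fun u => by gcongr; exact sker_mul_rpow_neg_le hc hρ X Y u
    _ = K * (2 * ∫⁻ u, sker (c + ρ) 0 u) := by
        rw [lintegral_const_mul _ (by fun_prop), lintegral_add_left (by fun_prop),
          lintegral_sker _ X, lintegral_sker _ Y, two_mul]

lemma exists_lintegral_lintegral_sker_chain_le {c γ c' : ℝ} (hc : 0 ≤ c) (hc5 : c < 5)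
    (hγ : 0 < γ) (hγ5 : γ < 5) (hc' : 0 < c') (hc'5 : c' < 5) (hsum : c + γ + c' < 10) :
    ∃ M : ℝ≥0∞, M ≠ ⊤ ∧
      ∀ X Y : ℝ⁴, ∫⁻ u, ∫⁻ v, sker c X u * sker γ u v * sker c' Y v ≤ M := by
  obtain ⟨ρ, hρ_low, hρ_high⟩ : ∃ ρ, max (γ + c' - 5) 0 < ρ ∧ ρ < min γ (min c' (5 - c)) :=
    exists_between (max_lt (lt_min (by linarith) (lt_min (by linarith) (by linarith)))
      (lt_min hγ (lt_min hc' (by linarith))))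
  simp only [max_lt_iff, lt_min_iff] at hρ_low hρ_high
  obtain ⟨hρ_dim, hρ⟩ := hρ_low
  obtain ⟨hργ, hρc', hρc⟩ := hρ_high
  refine ⟨_, ?_, lintegral_lintegral_sker_chain_le hc hρ.le hργ.le hρc'.le⟩
  have := lintegral_sker_zero_lt_top (δ := γ + c' - ρ) (by linarith) (by linarith)
  have := lintegral_sker_zero_lt_top (δ := c + ρ) (by linarith) (by linarith)
  finiteness

lemma lintegral_lintegral_add_mul_add_le {c γ c' : ℝ} {M : ℝ≥0∞}
    (hM : ∀ X Y : ℝ⁴, ∫⁻ u, ∫⁻ v, sker c X u * sker γ u v * sker c' Y v ≤ M)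
    (X₁ X₂ Y₁ Y₂ : ℝ⁴) :
    ∫⁻ u, ∫⁻ v, (sker c X₁ u + sker c X₂ u) * sker γ u v * (sker c' Y₁ v + sker c' Y₂ v) ≤
      4 * M := by
  set f : ℝ⁴ → ℝ⁴ → ℝ⁴ → ℝ⁴ → ℝ≥0∞ := fun X Y u v => sker c X u * sker γ u v * sker c' Y v
  calc ∫⁻ u, ∫⁻ v, (sker c X₁ u + sker c X₂ u) * sker γ u v * (sker c' Y₁ v + sker c' Y₂ v)
      = ∫⁻ u, ((∫⁻ v, f X₁ Y₁ u v) + ∫⁻ v, f X₁ Y₂ u v) +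
          ((∫⁻ v, f X₂ Y₁ u v) + ∫⁻ v, f X₂ Y₂ u v) := by
        refine lintegral_congr fun u => ?_
        rw [← lintegral_add_left (by fun_prop), ← lintegral_add_left (by fun_prop),
          ← lintegral_add_left (by fun_prop)]
        refine lintegral_congr fun v => ?_
        simp only [f]
        ring
    _ = ((∫⁻ u, ∫⁻ v, f X₁ Y₁ u v) + ∫⁻ u, ∫⁻ v, f X₁ Y₂ u v) +
          ((∫⁻ u, ∫⁻ v, f X₂ Y₁ u v) + ∫⁻ u, ∫⁻ v, f X₂ Y₂ u v) := by
        rw [lintegral_add_left (by fun_prop), lintegral_add_left (by fun_prop),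
          lintegral_add_left (by fun_prop)]
    _ ≤ (M + M) + (M + M) := by gcongr <;> apply hM
    _ = 4 * M := by ring

lemma lintegral_lintegral_sker_five_le {α β γ α' β' ζ η : ℝ} {M : ℝ≥0∞} (hζ : 0 ≤ ζ)
    (hζα : ζ ≤ α) (hζβ : ζ ≤ β) (hη : 0 ≤ η) (hηα' : η ≤ α') (hηβ' : η ≤ β')
    (hM : ∀ X Y : ℝ⁴,
      ∫⁻ u, ∫⁻ v, sker (α + β - ζ) X u * sker γ u v * sker (α' + β' - η) Y v ≤ M)
    (z' w' z'' w'' : ℝ⁴) :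
    ∫⁻ u, ∫⁻ v, sker α z' u * sker β w' u * sker γ u v * sker α' z'' v * sker β' w'' v ≤
      2 ^ ζ * 2 ^ η * (4 * M) * ENNReal.ofReal (pnorm (z' - w')) ^ (-ζ) *
        ENNReal.ofReal (pnorm (z'' - w'')) ^ (-η) := by
  set A := 2 ^ ζ * ENNReal.ofReal (pnorm (z' - w')) ^ (-ζ)
  set B := 2 ^ η * ENNReal.ofReal (pnorm (z'' - w'')) ^ (-η)
  calc ∫⁻ u, ∫⁻ v, sker α z' u * sker β w' u * sker γ u v * sker α' z'' v * sker β' w'' v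
      ≤ ∫⁻ u, ∫⁻ v, A * B * ((sker (α + β - ζ) z' u + sker (α + β - ζ) w' u) * sker γ u v *
          (sker (α' + β' - η) z'' v + sker (α' + β' - η) w'' v)) := by
        refine lintegral_mono fun u => lintegral_mono fun v => ?_
        calc _ = sker α z' u * sker β w' u * sker γ u v * (sker α' z'' v * sker β' w'' v) := by
              ring
          _ ≤ A * (sker (α + β - ζ) z' u + sker (α + β - ζ) w' u) * sker γ u v *
                (B * (sker (α' + β' - η) z'' v + sker (α' + β' - η) w'' v)) := by
              gcongr ?_ * _ * ?_
              · exact sker_mul_sker_le hζ hζα hζβ z' w' u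
              · exact sker_mul_sker_le hη hηα' hηβ' z'' w'' v
          _ = _ := by ring
    _ = A * B * ∫⁻ u, ∫⁻ v, (sker (α + β - ζ) z' u + sker (α + β - ζ) w' u) * sker γ u v *
          (sker (α' + β' - η) z'' v + sker (α' + β' - η) w'' v) := by
        rw [← lintegral_const_mul _ (by fun_prop)]
        exact lintegral_congr fun u => lintegral_const_mul _ (by fun_prop)
    _ ≤ A * B * (4 * M) := by
        gcongr
        exact lintegral_lintegral_add_mul_add_le hM z' w' z'' w''
    _ = _ := by ring

/-- under the stated exponent conditions the iterated integral
`∫∫ ‖z'-u‖^{-α} ‖w'-u‖^{-β} ‖u-v‖^{-γ} ‖z''-v‖^{-α'} ‖w''-v‖^{-β'} du dv`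
is bounded by `C ‖z'-w'‖^{-ζ} ‖z''-w''‖^{-η}`. -/
theorem statement7 :
    ∀ α β γ α' β' ζ η : ℝ,
      α ∈ Set.Ioo (0 : ℝ) 5 → β ∈ Set.Ioo (0 : ℝ) 5 → γ ∈ Set.Ioo (0 : ℝ) 5 →
      α' ∈ Set.Ioo (0 : ℝ) 5 → β' ∈ Set.Ioo (0 : ℝ) 5 →
      ζ ∈ Set.Ioc (0 : ℝ) (min α β) → η ∈ Set.Ioc (0 : ℝ) (min α' β') →
      α + β - 5 < ζ → α' + β' - 5 < η → α + β + α' + β' + γ - 10 < ζ + η →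
      ∃ C : ℝ, 0 < C ∧ ∀ z' w' z'' w'' : ℝ × (Fin 3 → ℝ),
        ∫⁻ u, ∫⁻ v, sker α z' u * sker β w' u * sker γ u v * sker α' z'' v * sker β' w'' v
            ∂(volume : Measure (ℝ × (Fin 3 → ℝ))) ∂(volume : Measure (ℝ × (Fin 3 → ℝ))) ≤
          ENNReal.ofReal C * (ENNReal.ofReal (pnorm (z' - w'))) ^ (-ζ) *
            (ENNReal.ofReal (pnorm (z'' - w''))) ^ (-η) := by
  rintro α β γ α' β' ζ η _ ⟨hβ, -⟩ ⟨hγ, hγ5⟩ _ ⟨hβ', -⟩ ⟨hζ, hζαβ⟩ ⟨hη, hηαβ⟩ hζ5 hη5 hsum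
  rw [le_min_iff] at hζαβ hηαβ
  obtain ⟨M, hM_top, hM⟩ := exists_lintegral_lintegral_sker_chain_le
    (c := α + β - ζ) (c' := α' + β' - η) (by linarith) (by linarith) hγ hγ5 (by linarith)
    (by linarith) (by linarith)
  have hK : (2 : ℝ≥0∞) ^ ζ * 2 ^ η * (4 * M) ≠ ⊤ := by finiteness
  refine ⟨(2 ^ ζ * 2 ^ η * (4 * M)).toReal + 1, by positivity, fun z' w' z'' w'' => ?_⟩
  refine (lintegral_lintegral_sker_five_le hζ.le hζαβ.1 hζαβ.2 hη.le hηαβ.1 hηαβ.2 hM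
    z' w' z'' w'').trans ?_
  gcongr
  exact (ENNReal.le_ofReal_iff_toReal_le hK (by positivity)).2 (by linarith)
end
end
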